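/- The map D sending a faithful (n+1)-dimensional Z_2^n-representation τ = ρ_0 ρ_1 ⋯ ρ_n (with {ρ_1,...,ρ_n} a basis of Hom(Z_2^n,Z_2), ρ_0 = ρ_1+⋯+ρ_{p+1}, and dual basis {α_1,...,α_n}) to [α_1,...,α_{p+1}] ⊗ {α_{p+2},...,α_n} induces an F_2-linear isomorphism from the F_2-vector space spanned by all faithful (n+1)-dimensional Z_2^n-representations onto the F_2-vector space with basis {[α_1,...,α_{p+1}] ⊗ {α_{p+2},...,α_n} : {α_1,...,α_n} a basis of Z_2^n, 0 ≤ p ≤ n-1}. -/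

import Mathlib

open Finset

attribute [local instance] Classical.propDecidable

abbrev V (n : ℕ) : Type := Fin n → ZMod 2

def LinIndep {n : ℕ} (s : Finset (V n)) : Prop :=
  LinearIndependent (ZMod 2) (fun x : (s : Set (V n)) => (x : V n))

def IsSimplex (n p : ℕ) (σ : Finset (V n)) : Prop :=
  σ.card = p + 1 ∧ LinIndep σ

def shift {n : ℕ} (σ : Finset (V n)) (α : V n) : Finset (V n) :=
  σ.image (· + α)

def SimpRel {n : ℕ} (σ σ' : Finset (V n)) : Prop :=
  σ = σ' ∨ ∃ α : V n, σ ∩ σ' = {α} ∧ shift (σ \ {α}) α = σ' \ {α}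

/-- The element `[σ] ⊗ τ` of `D_p ⊗ C_q`, realized as the chain
`∑_{σ' ~ σ} (σ', τ)` on pairs of simplices. -/
noncomputable def pairClass {n : ℕ} (σ τ : Finset (V n)) :
    (Finset (V n) × Finset (V n)) →₀ ZMod 2 :=
  ∑ σ' ∈ Finset.univ.filter (fun σ' => SimpRel σ σ'), Finsupp.single (σ', τ) 1

/-- Monomials in `F_2[Hom(Z_2^n, Z_2)]`, viewed as multisets of linear functionals:
these model `Z_2^n`-representations. -/
abbrev Mon (n : ℕ) : Type := Multiset (Module.Dual (ZMod 2) (V n))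

/-- A faithful `(n+1)`-dimensional `Z_2^n`-representation: `n+1` nonzero
functionals which collectively span `Hom(Z_2^n, Z_2)`. -/
def Faithful (n : ℕ) (m : Mon n) : Prop :=
  Multiset.card m = n + 1 ∧ (0 : Module.Dual (ZMod 2) (V n)) ∉ m ∧
    Submodule.span (ZMod 2) {f : Module.Dual (ZMod 2) (V n) | f ∈ m} = ⊤

/-- The `F_2`-span of the (singletons of) faithful `(n+1)`-dimensional
representations, i.e. the subspace `F̄_{n+1}` of the representation algebra. -/
noncomputable def FSpan (n : ℕ) : Submodule (ZMod 2) (Mon n →₀ ZMod 2) :=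
  Submodule.span (ZMod 2)
    {x : Mon n →₀ ZMod 2 | ∃ m : Mon n, Faithful n m ∧ x = Finsupp.single m 1}

/-- The `F_2`-vector space `𝔅_{n-2}`, spanned by the faithful basis elements
`[α_1,...,α_{p+1}] ⊗ {α_{p+2},...,α_n}` with `{α_1,...,α_n}` a basis of `Z_2^n`. -/
noncomputable def BSpan (n : ℕ) :
    Submodule (ZMod 2) ((Finset (V n) × Finset (V n)) →₀ ZMod 2) :=
  Submodule.span (ZMod 2)
    {y | ∃ s σ : Finset (V n), LinIndep s ∧ s.card = n ∧ σ ⊆ s ∧ σ.Nonempty ∧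
      y = pairClass σ (s \ σ)}

/-!
Every faithful representation is `ρ₀ ρ₁ ⋯ ρₙ` with `ρ₁, …, ρₙ` the coordinate functionals of a
basis `b` of `Z₂ⁿ` and `ρ₀ = ∑_{i ∈ S} ρᵢ`, and `D` sends it to `[b(S)] ⊗ b(Sᶜ)`. The vectors on
which exactly one factor is nonzero are those of `b(Sᶜ)`, so `b(Sᶜ)` depends only on the
representation, and once the head `ρ₀` is fixed, so does `b(S)`. Choosing instead some `ρⱼ`,
`j ∈ S`, as the head replaces `b(S)` by an equivalent simplex, and every simplex equivalent to
`b(S)` arises in this way. Hence `D` is well defined; and if the images of two faithful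
representations share a term `(σ, τ)`, both have presentations with `b(S) = σ`, `b(Sᶜ) = τ`,
which determine the representation. So distinct faithful representations have images with
disjoint supports, and `D` is injective.
-/

variable {n : ℕ}

lemma ZMod.eq_one_of_ne_zero {a : ZMod 2} (h : a ≠ 0) : a = 1 := Fin.eq_one_of_ne_zero a h

lemma map_univ_val_eq_cons {α β : Type*} [Fintype α] [DecidableEq α] (g : α → β) (j : α) :
    univ.val.map g = g j ::ₘ (univ.erase j).val.map g := by
  rw [← insert_erase (mem_univ j), insert_val_of_notMem (notMem_erase j _), Multiset.map_cons,
    erase_insert_eq_erase, erase_eq_of_notMem (notMem_erase j _)]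

section DualPair

open Module

variable {K W ι : Type*} [Field K] [AddCommGroup W] [Module K W] [DecidableEq ι]
  {ρ : ι → Dual K W} {α : ι → W}

lemma linearIndependent_of_dualPair (hd : ∀ i j, ρ i (α j) = if i = j then 1 else 0) :
    LinearIndependent K α := by
  refine LinearIndependent.of_comp (LinearMap.pi ρ) ?_
  have hpi : ⇑(LinearMap.pi ρ) ∘ α = fun j => Pi.single j 1 := by
    ext j i
    simp [hd, Pi.single_apply]
  rw [hpi]
  exact Pi.linearIndependent_single_one ι K

lemma Module.Basis.coord_mem_range_coord {b b' : Basis ι K W} (h : Set.range b ⊆ Set.range b')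
    (i : ι) : b.coord i ∈ Set.range b'.coord := by
  obtain ⟨k, hk⟩ := h ⟨i, rfl⟩
  refine ⟨k, b.ext fun l => ?_⟩
  obtain ⟨l', hl'⟩ := h ⟨l, rfl⟩
  have hiff : l' = k ↔ l = i := by rw [← b'.injective.eq_iff, ← b.injective.eq_iff, hk, hl']
  conv_lhs => rw [← hl']
  simp only [Basis.coord_apply, Basis.repr_self, Finsupp.single_apply, hiff]

variable [FiniteDimensional K W] [Fintype ι]

noncomputable def basisOfDualPair (hd : ∀ i j, ρ i (α j) = if i = j then 1 else 0)
    (hcard : Fintype.card ι = finrank K W) : Basis ι K W :=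
  basisOfLinearIndependentOfCardEqFinrank' α (linearIndependent_of_dualPair hd) hcard

variable (hd : ∀ i j, ρ i (α j) = if i = j then 1 else 0) (hcard : Fintype.card ι = finrank K W)

@[simp]
lemma coe_basisOfDualPair : ⇑(basisOfDualPair hd hcard) = α :=
  coe_basisOfLinearIndependentOfCardEqFinrank' _ _ _

@[simp]
lemma coord_basisOfDualPair (i : ι) : (basisOfDualPair hd hcard).coord i = ρ i :=
  (basisOfDualPair hd hcard).ext fun j => by
    rw [Basis.coord_apply, Basis.repr_self, Finsupp.single_apply, coe_basisOfDualPair, hd]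
    exact if_congr eq_comm rfl rfl

lemma Module.Basis.exists_coord_eq (B : Basis ι K (Dual K W)) :
    ∃ b : Basis ι K W, ∀ i, b.coord i = B i :=
  ⟨B.dualBasis.map (evalEquiv K W).symm, fun i =>
    (B.dualBasis.map (evalEquiv K W).symm).ext fun j => by
      rw [Basis.coord_apply, Basis.repr_self, Basis.map_apply, apply_evalEquiv_symm_apply,
        Basis.dualBasis_apply_self, Finsupp.single_apply]
      exact if_congr eq_comm rfl rfl⟩

end DualPair

section Injectivity

variable {ι κ R : Type*} [Ring R] [NoZeroDivisors R]

lemma Finsupp.injOn_linearCombination_supported {v : ι → κ →₀ R} {s : Set ι}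
    (hv : ∀ i ∈ s, ∃ k, v i k ≠ 0 ∧ ∀ j ∈ s, v j k ≠ 0 → j = i) :
    Set.InjOn (linearCombination R v) (supported R R s) := by
  refine LinearMap.injOn_of_disjoint_ker le_rfl (Submodule.disjoint_def.mpr fun z hz hker => ?_)
  ext i
  by_cases hi : i ∈ s
  · obtain ⟨k, hk, huniq⟩ := hv i hi
    have hzk := congrArg (· k) (LinearMap.mem_ker.mp hker)
    simp only [linearCombination_apply, Finsupp.sum_apply, smul_apply, smul_eq_mul,
      coe_zero, Pi.zero_apply] at hzk
    rw [Finsupp.sum, Finset.sum_eq_single i (fun j hj hji => ?_) (fun hi' => by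
      rw [notMem_support_iff.mp hi', zero_mul])] at hzk
    · exact (mul_eq_zero.mp hzk).resolve_right hk
    · by_contra hjk
      exact hji (huniq j ((mem_supported R z).mp hz hj) (right_ne_zero_of_mul hjk))
  · exact notMem_support_iff.mp fun h => hi ((mem_supported R z).mp hz h)

end Injectivity

section Shift

lemma mem_shift {A : Finset (V n)} {a y : V n} : y ∈ shift A a ↔ y + a ∈ A := by
  simp only [shift, mem_image]
  refine ⟨?_, fun h => ⟨y + a, h, by simp [add_assoc, ZModModule.add_self]⟩⟩
  rintro ⟨x, hx, rfl⟩
  simpa [add_assoc, ZModModule.add_self] using hx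

lemma shift_zero (A : Finset (V n)) : shift A 0 = A := by
  ext; simp [mem_shift]

lemma shift_shift (A : Finset (V n)) (a b : V n) : shift (shift A a) b = shift A (a + b) := by
  ext; simp [mem_shift, add_assoc, add_comm b]

lemma LinIndep.zero_notMem {σ : Finset (V n)} (h : LinIndep σ) : (0 : V n) ∉ σ :=
  fun h0 => LinearIndependent.ne_zero ⟨0, h0⟩ h rfl

lemma LinIndep.add_notMem {σ : Finset (V n)} (h : LinIndep σ) {x a : V n} (hx : x ∈ σ)
    (ha : a ∈ σ) : x + a ∉ σ := by
  intro hxa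
  have hsub : insert (x + a) ({x, a} : Set (V n)) ⊆ σ := by
    simp [Set.insert_subset_iff, hx, ha, hxa]
  have hspan : x + a ∈ Submodule.span (ZMod 2) ({x, a} : Set (V n)) :=
    add_mem (Submodule.subset_span (by simp)) (Submodule.subset_span (by simp))
  rcases (linearIndepOn_id_insert_iff.mp ((show LinearIndepOn (ZMod 2) id (σ : Set (V n))
    from h).mono hsub)).2 hspan with h' | h'
  · exact h.zero_notMem (add_eq_left.mp h' ▸ ha)
  · exact h.zero_notMem (add_eq_right.mp (Set.mem_singleton_iff.mp h') ▸ hx)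

end Shift

section SimplexClass

lemma erase_shift_insert_zero {σ : Finset (V n)} (h0 : (0 : V n) ∉ σ) {a : V n} (ha : a ∈ σ) :
    (shift (insert 0 σ) a).erase 0 = insert a (shift (σ.erase a) a) := by
  ext y
  simp only [mem_erase, mem_insert, mem_shift]
  constructor
  · rintro ⟨hy, hya | hya⟩
    · exact .inl (by simpa [add_assoc, ZModModule.add_self] using congrArg (· + a) hya)
    · refine .inr ⟨fun h' => hy ?_, hya⟩
      simpa [add_assoc, ZModModule.add_self] using congrArg (· + a) h'
  · rintro (rfl | ⟨hya, hy⟩)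
    · exact ⟨fun h' => h0 (h' ▸ ha), .inl (ZModModule.add_self y)⟩
    · exact ⟨fun h' => hya (by simp [h']), .inr hy⟩

lemma simpRel_iff {σ σ' : Finset (V n)} (h : LinIndep σ) :
    SimpRel σ σ' ↔ σ' = σ ∨ ∃ a ∈ σ, σ' = insert a (shift (σ.erase a) a) := by
  simp only [SimpRel, sdiff_singleton_eq_erase]
  refine or_congr eq_comm ⟨?_, ?_⟩
  · rintro ⟨a, hinter, hshift⟩
    have ha : a ∈ σ ∩ σ' := hinter ▸ mem_singleton_self a
    exact ⟨a, (mem_inter.mp ha).1, by rw [hshift, insert_erase (mem_inter.mp ha).2]⟩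
  · rintro ⟨a, ha, rfl⟩
    have haX : a ∉ shift (σ.erase a) a := by
      simpa [mem_shift, ZModModule.add_self] using fun _ => h.zero_notMem
    refine ⟨a, ?_, by rw [erase_insert haX]⟩
    ext x
    simp only [mem_inter, mem_insert, mem_shift, mem_erase, mem_singleton]
    refine ⟨fun ⟨hx, hxa⟩ => hxa.resolve_right fun h' => h.add_notMem hx ha h'.2, ?_⟩
    rintro rfl
    exact ⟨ha, .inl rfl⟩

lemma filter_simpRel_eq {σ : Finset (V n)} (h : LinIndep σ) :
    univ.filter (SimpRel σ) = (insert 0 σ).image (fun t => (shift (insert 0 σ) t).erase 0) := by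
  ext σ'
  simp only [mem_filter, mem_univ, true_and, simpRel_iff h, mem_image, mem_insert,
    exists_eq_or_imp, shift_zero, erase_insert h.zero_notMem]
  refine or_congr eq_comm (exists_congr fun a => and_congr_right fun ha => ?_)
  rw [erase_shift_insert_zero h.zero_notMem ha, eq_comm]

lemma filter_simpRel_congr {σ σ' : Finset (V n)} (h : LinIndep σ) (h' : LinIndep σ')
    (hrel : SimpRel σ σ') : univ.filter (SimpRel σ) = univ.filter (SimpRel σ') := by
  have hmem : σ' ∈ univ.filter (SimpRel σ) := mem_filter.mpr ⟨mem_univ _, hrel⟩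
  rw [filter_simpRel_eq h, mem_image] at hmem
  obtain ⟨t, ht, rfl⟩ := hmem
  have hcone : insert 0 ((shift (insert 0 σ) t).erase 0) = shift (insert 0 σ) t :=
    insert_erase (by simpa [mem_shift] using ht)
  rw [filter_simpRel_eq h, filter_simpRel_eq h', hcone]
  ext σ''
  simp only [mem_image, mem_shift, shift_shift]
  refine ⟨fun ⟨s, hs, hσ''⟩ => ⟨s + t, by simpa [add_assoc, ZModModule.add_self] using hs, ?_⟩,
    fun ⟨s, hs, hσ''⟩ => ⟨s + t, hs, ?_⟩⟩
  · simpa [add_comm t, add_assoc, ZModModule.add_self] using hσ''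
  · simpa [add_comm t, add_assoc, ZModModule.add_self] using hσ''

lemma pairClass_congr {σ σ' : Finset (V n)} (h : LinIndep σ) (h' : LinIndep σ')
    (hrel : SimpRel σ σ') (τ : Finset (V n)) : pairClass σ τ = pairClass σ' τ := by
  rw [pairClass, pairClass, filter_simpRel_congr h h' hrel]

lemma pairClass_apply (σ τ σ' τ' : Finset (V n)) :
    pairClass σ τ (σ', τ') = if SimpRel σ σ' ∧ τ = τ' then 1 else 0 := by
  simp only [pairClass, Finsupp.finsetSum_apply, Finsupp.single_apply, Prod.mk.injEq, ite_and]
  by_cases hτ : τ = τ' <;> simp [hτ]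

end SimplexClass

section Presentation

open Module

variable (b : Basis (Fin n) (ZMod 2) (V n)) (S : Finset (Fin n))

noncomputable def headOf : Dual (ZMod 2) (V n) := ∑ i ∈ S, b.coord i

noncomputable def monOf : Mon n := headOf b S ::ₘ univ.val.map b.coord

noncomputable def presClass : (Finset (V n) × Finset (V n)) →₀ ZMod 2 :=
  pairClass (S.image b) (Sᶜ.image b)

lemma nodup_map_coord : (univ.val.map b.coord).Nodup :=
  univ.nodup.map (b.coe_dualBasis ▸ b.dualBasis.injective)

lemma headOf_apply_basis (j : Fin n) : headOf b S (b j) = if j ∈ S then 1 else 0 := by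
  simp [headOf, Finsupp.single_apply]

lemma headOf_eq_one_of_mem_image {v : V n} (hv : v ∈ S.image b) : headOf b S v = 1 := by
  obtain ⟨j, hj, rfl⟩ := mem_image.mp hv
  simp [headOf_apply_basis, hj]

lemma headOf_eq_zero_of_mem_image_compl {v : V n} (hv : v ∈ Sᶜ.image b) : headOf b S v = 0 := by
  obtain ⟨j, hj, rfl⟩ := mem_image.mp hv
  simpa [headOf_apply_basis] using mem_compl.mp hj

lemma countP_map_coord (v : V n) :
    (univ.val.map b.coord).countP (fun f => f v = 1) = #(b.repr v).support := by
  rw [Multiset.countP_map]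
  change #(univ.filter fun i => b.repr v i = 1) = _
  congr 1
  ext i
  simpa using ⟨fun h => h ▸ one_ne_zero, ZMod.eq_one_of_ne_zero⟩

lemma card_support_repr_eq_one_iff {v : V n} : #(b.repr v).support = 1 ↔ v ∈ Set.range b := by
  rw [Finsupp.card_support_eq_one]
  constructor
  · rintro ⟨i, hi, hv⟩
    refine ⟨i, b.repr.injective ?_⟩
    rw [hv, ZMod.eq_one_of_ne_zero hi, b.repr_self]
  · rintro ⟨i, rfl⟩
    exact ⟨i, by simp, by simp⟩

lemma image_eq_filter_headOf : S.image b = univ.filter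
    (fun v => headOf b S v = 1 ∧ (univ.val.map b.coord).countP (fun f => f v = 1) = 1) := by
  ext v
  simp only [mem_image, mem_filter, mem_univ, true_and, countP_map_coord,
    card_support_repr_eq_one_iff, Set.mem_range]
  constructor
  · rintro ⟨j, hj, rfl⟩
    exact ⟨by simp [headOf_apply_basis, hj], j, rfl⟩
  · rintro ⟨hv, j, rfl⟩
    exact ⟨j, by simpa [headOf_apply_basis] using hv, rfl⟩

lemma image_compl_eq_filter :
    Sᶜ.image b = univ.filter (fun v => (monOf b S).countP (fun f => f v = 1) = 1) := by
  ext v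
  simp only [mem_filter, mem_univ, true_and, monOf, Multiset.countP_cons, countP_map_coord]
  constructor
  · intro hv
    obtain ⟨j, -, rfl⟩ := mem_image.mp hv
    simp [headOf_eq_zero_of_mem_image_compl b S hv]
  · intro hv
    split_ifs at hv with hhead
    · have hv0 : v = 0 := by simpa using hv
      simp [hv0] at hhead
    · obtain ⟨j, rfl⟩ := (card_support_repr_eq_one_iff b).mp (by simpa using hv)
      exact mem_image_of_mem b (by simpa [headOf_apply_basis] using hhead)

lemma monOf_faithful (hS : S.Nonempty) : Faithful n (monOf b S) := by
  refine ⟨by simp [monOf], ?_, ?_⟩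
  · simp only [monOf, Multiset.mem_cons, Multiset.mem_map, not_or, not_exists, not_and]
    refine ⟨fun h => ?_, fun i _ hi => ?_⟩
    · obtain ⟨j, hj⟩ := hS
      simpa [← h, hj] using headOf_apply_basis b S j
    · simpa using congrArg (· (b i)) hi
  · rw [eq_top_iff, ← b.dualBasis.span_eq]
    refine Submodule.span_mono ?_
    rintro _ ⟨i, rfl⟩
    simp [monOf]

lemma eq_headOf_filter (f : Dual (ZMod 2) (V n)) :
    f = headOf b (univ.filter fun i => f (b i) = 1) := by
  conv_lhs => rw [← b.sum_dual_apply_smul_coord f]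
  rw [headOf, sum_filter]
  refine sum_congr rfl fun i _ => ?_
  by_cases hi : f (b i) = 1
  · simp [hi]
  · simp [show f (b i) = 0 by by_contra h; exact hi (ZMod.eq_one_of_ne_zero h)]

lemma Faithful.exists_eq_monOf {m : Mon n} (h : Faithful n m) :
    ∃ (b : Basis (Fin n) (ZMod 2) (V n)) (S : Finset (Fin n)), S.Nonempty ∧ m = monOf b S := by
  obtain ⟨hcard, h0, hspan⟩ := h
  obtain ⟨t, htm, hspan_t, hli⟩ := exists_linearIndependent (ZMod 2) {f | f ∈ m}
  have : Fintype t := (m.toFinset.finite_toSet.subset fun f hf => by simpa using htm hf).fintype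
  let B := Basis.mk hli (by rw [Subtype.range_coe, hspan_t, hspan])
  have hcard_t : Fintype.card t = n := by
    rw [← Module.finrank_eq_card_basis B, Subspace.dual_finrank_eq, Module.finrank_fin_fun]
  obtain ⟨b, hb⟩ := Basis.exists_coord_eq (B.reindex (Fintype.equivFinOfCardEq hcard_t))
  have hle : univ.val.map b.coord ≤ m := by
    rw [Multiset.le_iff_subset (nodup_map_coord b)]
    intro f hf
    obtain ⟨i, -, rfl⟩ := Multiset.mem_map.mp hf
    simpa [hb, B] using htm (Subtype.mem _)
  obtain ⟨f, hf⟩ : ∃ f, m - univ.val.map b.coord = {f} :=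
    Multiset.card_eq_one.mp (by rw [Multiset.card_sub hle, hcard, Multiset.card_map]; simp)
  have hm : m = f ::ₘ univ.val.map b.coord := by
    rw [← Multiset.singleton_add, ← hf, tsub_add_cancel_of_le hle]
  refine ⟨b, univ.filter fun i => f (b i) = 1, nonempty_iff_ne_empty.mpr fun hS => h0 ?_, ?_⟩
  · rw [hm, eq_headOf_filter b f, hS]
    simp [headOf]
  · rw [hm, monOf, ← eq_headOf_filter]

lemma exists_image_eq_of_linIndep {s σ : Finset (V n)} (hs : LinIndep s) (hcard : s.card = n)
    (hσ : σ ⊆ s) :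
    ∃ (b : Basis (Fin n) (ZMod 2) (V n)) (S : Finset (Fin n)),
      S.image b = σ ∧ Sᶜ.image b = s \ σ := by
  have hcard' : Fintype.card (s : Set (V n)) = n := by simp [hcard]
  let b := (basisOfLinearIndependentOfCardEqFinrank' _ hs (by simp [hcard])).reindex
    (Fintype.equivFinOfCardEq hcard')
  have hb : ∀ i, b i = ((Fintype.equivFinOfCardEq hcard').symm i : V n) := fun i => by simp [b]
  have huniv : univ.image b = s := by
    ext x
    simp only [mem_image, mem_univ, true_and, hb]
    refine ⟨by rintro ⟨i, rfl⟩; exact Subtype.mem _, fun hx => ⟨_, congrArg Subtype.val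
      ((Fintype.equivFinOfCardEq hcard').symm_apply_apply ⟨x, hx⟩)⟩⟩
  refine ⟨b, univ.filter (b · ∈ σ), ?_, ?_⟩
  · rw [← filter_image (p := (· ∈ σ)), huniv, filter_mem_eq_inter, inter_eq_right.mpr hσ]
  · rw [compl_filter, ← filter_image (p := (· ∉ σ)), huniv, sdiff_eq_filter]

end Presentation

section WellDefined

open Module

variable (b : Basis (Fin n) (ZMod 2) (V n)) (S : Finset (Fin n))

lemma linIndep_image : LinIndep (S.image b) :=
  b.linearIndependent.linearIndepOn_id.mono (by simp)

lemma dualPair_pivot {j : Fin n} (hj : j ∈ S) (k l : Fin n) :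
    Function.update b.coord j (headOf b S) k (if l ∈ S.erase j then b l + b j else b l) =
      if k = l then 1 else 0 := by
  by_cases hl : l ∈ S.erase j
  · obtain ⟨hlj, hlS⟩ := mem_erase.mp hl
    rw [if_pos hl]
    rcases eq_or_ne k j with rfl | hk
    · simp [headOf_apply_basis, hlS, hj, Ne.symm hlj, ZModModule.add_self]
    · simp [hk, Finsupp.single_apply, eq_comm]
  · rw [if_neg hl]
    rcases eq_or_ne k j with rfl | hk
    · rcases eq_or_ne l k with rfl | hlk
      · simp [headOf_apply_basis, hj]
      · have hlS : l ∉ S := fun h => hl (mem_erase.mpr ⟨hlk, h⟩)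
        simp [headOf_apply_basis, hlk.symm, hlS]
    · simp [hk, Finsupp.single_apply, eq_comm]

/-- The presentation of `monOf b S` with head `ρⱼ`, `j ∈ S`: its coordinate functionals are those
of `b` with `ρⱼ` replaced by `ρ₀ = headOf b S`. -/
noncomputable def pivotBasis {j : Fin n} (hj : j ∈ S) : Basis (Fin n) (ZMod 2) (V n) :=
  basisOfDualPair (dualPair_pivot b S hj) (by simp)

variable {j : Fin n} (hj : j ∈ S)

lemma pivotBasis_apply (k : Fin n) :
    pivotBasis b S hj k = if k ∈ S.erase j then b k + b j else b k :=
  congrFun (coe_basisOfDualPair _ _) k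

lemma coord_pivotBasis_self : (pivotBasis b S hj).coord j = headOf b S :=
  (coord_basisOfDualPair _ _ j).trans (Function.update_self ..)

lemma coord_pivotBasis_of_ne {k : Fin n} (hk : k ≠ j) : (pivotBasis b S hj).coord k = b.coord k :=
  (coord_basisOfDualPair _ _ k).trans (Function.update_of_ne hk _ _)

lemma headOf_pivotBasis : headOf (pivotBasis b S hj) S = b.coord j := by
  rw [headOf, ← add_sum_erase S _ hj, coord_pivotBasis_self,
    sum_congr rfl fun k hk => coord_pivotBasis_of_ne b S hj (ne_of_mem_erase hk), headOf,
    ← add_sum_erase S _ hj, add_assoc, ZModModule.add_self, add_zero]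

lemma monOf_pivotBasis : monOf (pivotBasis b S hj) S = monOf b S := by
  rw [monOf, monOf, headOf_pivotBasis, map_univ_val_eq_cons _ j, map_univ_val_eq_cons b.coord j,
    coord_pivotBasis_self, Multiset.cons_swap]
  congr 2
  exact Multiset.map_congr rfl fun k hk =>
    coord_pivotBasis_of_ne b S hj (ne_of_mem_erase (s := univ) hk)

lemma image_pivotBasis :
    S.image (pivotBasis b S hj) = insert (b j) (shift ((S.image b).erase (b j)) (b j)) := by
  have hsplit : S.image (pivotBasis b S hj) =
      insert (pivotBasis b S hj j) ((S.erase j).image (pivotBasis b S hj)) := by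
    rw [← image_insert, insert_erase hj]
  rw [hsplit, shift, ← image_erase b.injective, image_image, pivotBasis_apply,
    if_neg (notMem_erase j S)]
  exact congrArg _ (image_congr fun k hk => by rw [pivotBasis_apply, if_pos (mem_coe.mp hk)]; rfl)

lemma image_compl_pivotBasis : Sᶜ.image (pivotBasis b S hj) = Sᶜ.image b :=
  image_congr fun k hk => by
    rw [pivotBasis_apply, if_neg fun h => mem_compl.mp hk (mem_of_mem_erase h)]

variable {b S}

lemma image_eq_of_monOf_eq_of_headOf_eq {b' : Basis (Fin n) (ZMod 2) (V n)} {S' : Finset (Fin n)}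
    (h : monOf b S = monOf b' S') (hhead : headOf b S = headOf b' S') :
    S.image b = S'.image b' := by
  rw [monOf, monOf, hhead, Multiset.cons_inj_right] at h
  rw [image_eq_filter_headOf, image_eq_filter_headOf, hhead, h]

lemma image_compl_eq_of_monOf_eq {b' : Basis (Fin n) (ZMod 2) (V n)} {S' : Finset (Fin n)}
    (h : monOf b S = monOf b' S') : Sᶜ.image b = S'ᶜ.image b' := by
  rw [image_compl_eq_filter, image_compl_eq_filter, h]

lemma exists_mem_headOf_eq_coord {b' : Basis (Fin n) (ZMod 2) (V n)} {S' : Finset (Fin n)}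
    (h : monOf b S = monOf b' S') (hhead : headOf b S ≠ headOf b' S') :
    ∃ j ∈ S, headOf b' S' = b.coord j := by
  have hmem : headOf b' S' ∈ monOf b S := h ▸ Multiset.mem_cons_self _ _
  rw [monOf, Multiset.mem_cons, Multiset.mem_map] at hmem
  obtain ⟨j, -, hj⟩ := hmem.resolve_left (Ne.symm hhead)
  refine ⟨j, by_contra fun hjS => ?_, hj.symm⟩
  -- a head vanishes on `Sᶜ.image b = S'ᶜ.image b'`, but `b.coord j (b j) = 1`
  have hzero := headOf_eq_zero_of_mem_image_compl b' S'
    (image_compl_eq_of_monOf_eq h ▸ mem_image_of_mem b (mem_compl.mpr hjS))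
  simp [← hj] at hzero

lemma presClass_eq_of_monOf_eq {b' : Basis (Fin n) (ZMod 2) (V n)} {S' : Finset (Fin n)}
    (h : monOf b S = monOf b' S') : presClass b S = presClass b' S' := by
  rw [presClass, presClass, ← image_compl_eq_of_monOf_eq h]
  by_cases hhead : headOf b S = headOf b' S'
  · rw [image_eq_of_monOf_eq_of_headOf_eq h hhead]
  obtain ⟨j, hj, hj'⟩ := exists_mem_headOf_eq_coord h hhead
  have hrel : SimpRel (S.image b) (S.image (pivotBasis b S hj)) :=
    (simpRel_iff (linIndep_image b S)).mpr
      (.inr ⟨b j, mem_image_of_mem b hj, image_pivotBasis b S hj⟩)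
  rw [pairClass_congr (linIndep_image b S) (linIndep_image _ S) hrel,
    image_eq_of_monOf_eq_of_headOf_eq ((monOf_pivotBasis b S hj).trans h)
      ((headOf_pivotBasis b S hj).trans hj'.symm)]

lemma exists_monOf_eq_of_simpRel {σ : Finset (V n)} (hrel : SimpRel (S.image b) σ) :
    ∃ b' : Basis (Fin n) (ZMod 2) (V n), monOf b' S = monOf b S ∧ S.image b' = σ ∧
      Sᶜ.image b' = Sᶜ.image b := by
  rcases (simpRel_iff (linIndep_image b S)).mp hrel with rfl | ⟨a, ha, rfl⟩
  · exact ⟨b, rfl, rfl, rfl⟩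
  obtain ⟨j, hj, rfl⟩ := mem_image.mp ha
  exact ⟨pivotBasis b S hj, monOf_pivotBasis b S hj, image_pivotBasis b S hj,
    image_compl_pivotBasis b S hj⟩

lemma monOf_eq_of_image_eq {b' : Basis (Fin n) (ZMod 2) (V n)} {S' : Finset (Fin n)}
    (hσ : S.image b = S'.image b') (hτ : Sᶜ.image b = S'ᶜ.image b') : monOf b S = monOf b' S' := by
  have huniv : univ.image b = univ.image b' := by
    conv_lhs => rw [← union_compl S]
    rw [image_union, hσ, hτ, ← image_union, union_compl]
  have hrange : Set.range b = Set.range b' := by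
    ext v
    simpa using Finset.ext_iff.mp huniv v
  have hhead : headOf b S = headOf b' S' := b.ext fun k => by
    by_cases hk : k ∈ S
    · have hv := mem_image_of_mem b hk
      rw [headOf_eq_one_of_mem_image b S hv, headOf_eq_one_of_mem_image b' S' (hσ ▸ hv)]
    · have hv := mem_image_of_mem b (mem_compl.mpr hk)
      rw [headOf_eq_zero_of_mem_image_compl b S hv,
        headOf_eq_zero_of_mem_image_compl b' S' (hτ ▸ hv)]
  have hcoord : Set.range b.coord = Set.range b'.coord :=
    (Set.range_subset_iff.mpr (Basis.coord_mem_range_coord hrange.subset)).antisymm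
      (Set.range_subset_iff.mpr (Basis.coord_mem_range_coord hrange.symm.subset))
  rw [monOf, monOf, hhead, Multiset.cons_inj_right, (nodup_map_coord b).ext (nodup_map_coord b')]
  simpa [Set.ext_iff] using hcoord

lemma presClass_apply_self : presClass b S (S.image b, Sᶜ.image b) = 1 := by
  simp [presClass, pairClass_apply, SimpRel]

lemma monOf_eq_of_presClass_apply_ne_zero {b' : Basis (Fin n) (ZMod 2) (V n)}
    {S' : Finset (Fin n)} (h : presClass b' S' (S.image b, Sᶜ.image b) ≠ 0) :
    monOf b' S' = monOf b S := by
  rw [presClass, pairClass_apply, ne_eq, ite_eq_right_iff, not_forall] at h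
  obtain ⟨⟨hrel, hτ⟩, -⟩ := h
  obtain ⟨b'', hmon, hσ, hτ''⟩ := exists_monOf_eq_of_simpRel hrel
  rw [← hmon]
  exact monOf_eq_of_image_eq hσ (hτ''.trans hτ)

end WellDefined

section Main

open Module

/-- The map `D`; the choice of presentation is immaterial by `presClass_eq_of_monOf_eq`. -/
noncomputable def monClass (m : Mon n) : (Finset (V n) × Finset (V n)) →₀ ZMod 2 :=
  if h : ∃ p : Basis (Fin n) (ZMod 2) (V n) × Finset (Fin n), m = monOf p.1 p.2 then
    presClass h.choose.1 h.choose.2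
  else 0

lemma monClass_monOf (b : Basis (Fin n) (ZMod 2) (V n)) (S : Finset (Fin n)) :
    monClass (monOf b S) = presClass b S := by
  have h : ∃ p : Basis (Fin n) (ZMod 2) (V n) × Finset (Fin n), monOf b S = monOf p.1 p.2 :=
    ⟨(b, S), rfl⟩
  rw [monClass, dif_pos h]
  exact presClass_eq_of_monOf_eq h.choose_spec.symm

lemma image_monClass_faithful : monClass '' {m | Faithful n m} =
    {y | ∃ s σ : Finset (V n), LinIndep s ∧ s.card = n ∧ σ ⊆ s ∧ σ.Nonempty ∧
      y = pairClass σ (s \ σ)} := by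
  ext y
  constructor
  · rintro ⟨m, hm, rfl⟩
    obtain ⟨b, S, hS, rfl⟩ := hm.exists_eq_monOf
    refine ⟨univ.image b, S.image b, ?_, ?_, image_subset_image (subset_univ S), hS.image b, ?_⟩
    · simpa using linIndep_image b univ
    · simp [card_image_of_injective _ b.injective]
    · rw [monClass_monOf, presClass, compl_eq_univ_sdiff, image_sdiff_of_injOn b.injective.injOn
        (subset_univ S)]
  · rintro ⟨s, σ, hs, hcard, hσs, hσ, rfl⟩
    obtain ⟨b, S, hσ', hτ'⟩ := exists_image_eq_of_linIndep hs hcard hσs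
    refine ⟨monOf b S, monOf_faithful b S ?_, by rw [monClass_monOf, presClass, hσ', hτ']⟩
    exact image_nonempty.mp (hσ'.symm ▸ hσ)

lemma FSpan_eq_supported : FSpan n = Finsupp.supported (ZMod 2) (ZMod 2) {m | Faithful n m} := by
  rw [FSpan, Finsupp.supported_eq_span_single]
  congr 1
  ext x
  simp [eq_comm]

lemma exists_apply_monClass_ne_zero {m : Mon n} (hm : Faithful n m) :
    ∃ k, monClass m k ≠ 0 ∧ ∀ m' ∈ {m | Faithful n m}, monClass m' k ≠ 0 → m' = m := by
  obtain ⟨b, S, -, rfl⟩ := hm.exists_eq_monOf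
  refine ⟨(S.image b, Sᶜ.image b), by simp [monClass_monOf, presClass_apply_self], ?_⟩
  rintro m' (hm' : Faithful n m') hk
  obtain ⟨b', S', -, rfl⟩ := hm'.exists_eq_monOf
  rw [monClass_monOf] at hk
  exact monOf_eq_of_presClass_apply_ne_zero hk

end Main

/-- the map `D`, sending a faithful representation
`τ = ρ_0 ρ_1 ⋯ ρ_n` (with `{ρ_1,...,ρ_n}` a basis, `ρ_0 = ∑_{i ∈ S} ρ_i` and dual basis
`α`) to `[α_1,...,α_{p+1}] ⊗ {α_{p+2},...,α_n}`, extends to a linear map inducing an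
`F_2`-linear isomorphism of `F̄_{n+1}` onto `𝔅_{n-2}`. -/
theorem stmt10 (n : ℕ) :
    ∃ L : (Mon n →₀ ZMod 2) →ₗ[ZMod 2] ((Finset (V n) × Finset (V n)) →₀ ZMod 2),
      (∀ (ρ0 : Module.Dual (ZMod 2) (V n)) (ρ : Fin n → Module.Dual (ZMod 2) (V n))
          (α : Fin n → V n) (S : Finset (Fin n)),
        LinearIndependent (ZMod 2) ρ →
        Submodule.span (ZMod 2) (Set.range ρ) = ⊤ →
        (∀ i j, ρ i (α j) = if i = j then 1 else 0) →
        S.Nonempty →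
        ρ0 = ∑ i ∈ S, ρ i →
        L (Finsupp.single (ρ0 ::ₘ Multiset.map ρ Finset.univ.val) 1)
          = pairClass (S.image α) (Sᶜ.image α)) ∧
      Submodule.map L (FSpan n) = BSpan n ∧
      Set.InjOn L (FSpan n : Set (Mon n →₀ ZMod 2)) := by
  refine ⟨Finsupp.linearCombination (ZMod 2) monClass, ?_, ?_, ?_⟩
  · intro ρ0 ρ α S _ _ hd _ hρ0
    have hcard : Fintype.card (Fin n) = Module.finrank (ZMod 2) (V n) := by simp
    have hmon : ρ0 ::ₘ univ.val.map ρ = monOf (basisOfDualPair hd hcard) S := by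
      simp [monOf, headOf, hρ0]
    rw [Finsupp.linearCombination_single, one_smul, hmon, monClass_monOf, presClass,
      coe_basisOfDualPair]
  · rw [FSpan_eq_supported, Finsupp.supported_eq_span_single, Submodule.map_span, Set.image_image]
    simp only [Finsupp.linearCombination_single, one_smul]
    rw [image_monClass_faithful, BSpan]
  · rw [FSpan_eq_supported]
    exact Finsupp.injOn_linearCombination_supported fun m hm => exists_apply_monClass_ne_zero hm
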